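/- With b = −2ω², σ₁ = 2(kℓ + ω²), σ₂ = 2(ℓ² + kℓ − ω²), σ₃ = 2(k² + kℓ − ω²), σ₄ = 2(k² + ℓ² + kℓ − 3ω²), the quantity D = 1 + b[1/(σ₁ − b) + 1/(σ₂ + b) + 1/(σ₃ + b) + 1/(σ₄ − b)] tends to 1 as |k| + |ℓ| → ∞ along pairs of nonzero integers k, ℓ with k + ℓ ≠ 0 (for fixed ω > 0 avoiding vanishing denominators). Consequently, for ω ∈ (1/2, 3/2) outside a finite set, D(k, ℓ, ω) ≠ 0 for all admissible (k, ℓ). -/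

import Mathlib

/-- `D = 1 + b[1/(σ₁−b) + 1/(σ₂+b) + 1/(σ₃+b) + 1/(σ₄−b)]` with `b = −2ω²`,
`σ₁ − b = 2(kℓ + 2ω²)`, `σ₂ + b = 2(ℓ² + kℓ − 2ω²)`, `σ₃ + b = 2(k² + kℓ − 2ω²)`,
`σ₄ − b = 2(k² + ℓ² + kℓ − 2ω²)`. -/
noncomputable def Dfun (k l : ℤ) (ω : ℝ) : ℝ :=
  1 + (-2 * ω ^ 2) *
    (1 / (2 * ((k : ℝ) * l + 2 * ω ^ 2)) +
     1 / (2 * ((l : ℝ) ^ 2 + k * l - 2 * ω ^ 2)) +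
     1 / (2 * ((k : ℝ) ^ 2 + k * l - 2 * ω ^ 2)) +
     1 / (2 * ((k : ℝ) ^ 2 + (l : ℝ) ^ 2 + k * l - 2 * ω ^ 2)))

/-- Admissibility: `k, ℓ` nonzero, `k + ℓ ≠ 0`, and all four denominators nonzero. -/
def admissible (k l : ℤ) (ω : ℝ) : Prop :=
  k ≠ 0 ∧ l ≠ 0 ∧ k + l ≠ 0 ∧
  (k : ℝ) * l + 2 * ω ^ 2 ≠ 0 ∧ (l : ℝ) ^ 2 + k * l - 2 * ω ^ 2 ≠ 0 ∧
  (k : ℝ) ^ 2 + k * l - 2 * ω ^ 2 ≠ 0 ∧ (k : ℝ) ^ 2 + (l : ℝ) ^ 2 + k * l - 2 * ω ^ 2 ≠ 0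

/-!
Writing `M = |k| + |ℓ|`, each of the four quantities `kℓ`, `ℓ(k + ℓ)`, `k(k + ℓ)`,
`k² + ℓ² + kℓ` has absolute value at least `M / 4`, because `k`, `ℓ`, `k + ℓ` are nonzero
integers. Hence every denominator of `D` is at least `M / 4 − 2ω²` in size and
`|D − 1| = O(ω² / M)`. In particular, for `ω² ≤ R` we have `D ≠ 0` as soon as
`M ≥ 4(6R + 1)`. Each of the finitely many remaining pairs contributes only the roots of the
polynomial in `ω` obtained by clearing denominators in `D`; that polynomial is nonzero since its
value at `ω = 0` is the product of the four quantities above.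
-/

open Polynomial

lemma one_le_abs_intCast {a : ℤ} (ha : a ≠ 0) : (1 : ℝ) ≤ |(a : ℝ)| := by
  exact_mod_cast Int.one_le_abs ha

lemma abs_add_abs_le_two_mul_abs_mul {a b : ℤ} (ha : a ≠ 0) (hb : b ≠ 0) :
    |(a : ℝ)| + |(b : ℝ)| ≤ 2 * |(a : ℝ) * b| := by
  have ha' := one_le_abs_intCast ha
  have hb' := one_le_abs_intCast hb
  rw [abs_mul]
  nlinarith

section Bases

variable {k l : ℤ}

lemma abs_add_abs_le_four_mul_abs_bases (hk : k ≠ 0) (hl : l ≠ 0) (hkl : k + l ≠ 0) :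
    |(k : ℝ)| + |(l : ℝ)| ≤ 4 * |(k : ℝ) * l| ∧
    |(k : ℝ)| + |(l : ℝ)| ≤ 4 * |(l : ℝ) ^ 2 + k * l| ∧
    |(k : ℝ)| + |(l : ℝ)| ≤ 4 * |(k : ℝ) ^ 2 + k * l| ∧
    |(k : ℝ)| + |(l : ℝ)| ≤ 4 * |(k : ℝ) ^ 2 + (l : ℝ) ^ 2 + k * l| := by
  have hkl_cast : ((k + l : ℤ) : ℝ) = k + l := Int.cast_add k l
  have h₁ := abs_add_abs_le_two_mul_abs_mul hk hl
  have h₂ := abs_add_abs_le_two_mul_abs_mul hl hkl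
  have h₃ := abs_add_abs_le_two_mul_abs_mul hk hkl
  have hk_le : |(k : ℝ)| ≤ |(l : ℝ)| + |(k : ℝ) + l| := by
    simpa [abs_neg, add_comm] using abs_add_le (-(l : ℝ)) (k + l)
  have hl_le : |(l : ℝ)| ≤ |(k : ℝ)| + |(k : ℝ) + l| := by
    simpa [abs_neg, add_comm] using abs_add_le (-(k : ℝ)) (k + l)
  rw [hkl_cast] at h₂ h₃
  refine ⟨by linarith [abs_nonneg ((k : ℝ) * l)], ?_, ?_, ?_⟩
  · rw [show (l : ℝ) ^ 2 + k * l = l * (k + l) by ring]; linarith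
  · rw [show (k : ℝ) ^ 2 + k * l = k * (k + l) by ring]; linarith
  · have hk' : |(k : ℝ)| ≤ (k : ℝ) ^ 2 := by
      rw [← sq_abs]; nlinarith [one_le_abs_intCast hk]
    have hl' : |(l : ℝ)| ≤ (l : ℝ) ^ 2 := by
      rw [← sq_abs]; nlinarith [one_le_abs_intCast hl]
    nlinarith [sq_nonneg ((k : ℝ) + l), le_abs_self ((k : ℝ) ^ 2 + (l : ℝ) ^ 2 + k * l)]

end Bases

lemma Dfun_sub_one (k l : ℤ) (ω : ℝ) :
    Dfun k l ω - 1 = -ω ^ 2 *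
      (1 / ((k : ℝ) * l + 2 * ω ^ 2) + 1 / ((l : ℝ) ^ 2 + k * l - 2 * ω ^ 2) +
        1 / ((k : ℝ) ^ 2 + k * l - 2 * ω ^ 2) +
        1 / ((k : ℝ) ^ 2 + (l : ℝ) ^ 2 + k * l - 2 * ω ^ 2)) := by
  simp only [Dfun, one_div, mul_inv]
  ring

lemma abs_one_div_add_le {x c E : ℝ} (hE : 0 < E) (h : E + |c| ≤ |x|) :
    |1 / (x + c)| ≤ 1 / E := by
  have : E ≤ |x + c| := by
    have := abs_sub_abs_le_abs_sub x (-c)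
    rw [abs_neg, sub_neg_eq_add] at this
    linarith
  rw [abs_div, abs_one]
  exact one_div_le_one_div_of_le hE this

section Estimate

variable {k l : ℤ} {ω : ℝ}

lemma abs_Dfun_sub_one_le (hk : k ≠ 0) (hl : l ≠ 0) (hkl : k + l ≠ 0) {E : ℝ} (hE : 0 < E)
    (h : 4 * (E + 2 * ω ^ 2) ≤ |(k : ℝ)| + |(l : ℝ)|) :
    |Dfun k l ω - 1| ≤ 4 * ω ^ 2 / E := by
  obtain ⟨b₁, b₂, b₃, b₄⟩ := abs_add_abs_le_four_mul_abs_bases hk hl hkl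
  have hc : |2 * ω ^ 2| = 2 * ω ^ 2 := abs_of_nonneg (by positivity)
  have hc' : |-(2 * ω ^ 2)| = 2 * ω ^ 2 := by rw [abs_neg, hc]
  have t₁ := abs_one_div_add_le (x := (k : ℝ) * l) (c := 2 * ω ^ 2) hE (by linarith)
  have t₂ := abs_one_div_add_le (x := (l : ℝ) ^ 2 + k * l) (c := -(2 * ω ^ 2)) hE (by linarith)
  have t₃ := abs_one_div_add_le (x := (k : ℝ) ^ 2 + k * l) (c := -(2 * ω ^ 2)) hE (by linarith)
  have t₄ := abs_one_div_add_le (x := (k : ℝ) ^ 2 + (l : ℝ) ^ 2 + k * l) (c := -(2 * ω ^ 2)) hE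
    (by linarith)
  simp only [← sub_eq_add_neg] at t₂ t₃ t₄
  rw [Dfun_sub_one, abs_mul, abs_neg, abs_of_nonneg (sq_nonneg ω)]
  calc ω ^ 2 * |_ + _ + _ + _| ≤ ω ^ 2 * (4 * (1 / E)) := by
        gcongr
        refine (abs_add_le _ _).trans ?_
        linarith [abs_add_three (1 / ((k : ℝ) * l + 2 * ω ^ 2))
          (1 / ((l : ℝ) ^ 2 + k * l - 2 * ω ^ 2)) (1 / ((k : ℝ) ^ 2 + k * l - 2 * ω ^ 2))]
    _ = 4 * ω ^ 2 / E := by ring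

lemma abs_Dfun_sub_one_lt (hk : k ≠ 0) (hl : l ≠ 0) (hkl : k + l ≠ 0) {δ : ℝ} (hδ : 0 < δ)
    (h : 4 * (4 * ω ^ 2 / δ + 1 + 2 * ω ^ 2) ≤ |(k : ℝ)| + |(l : ℝ)|) :
    |Dfun k l ω - 1| < δ := by
  have hE : 0 < 4 * ω ^ 2 / δ + 1 := by positivity
  refine (abs_Dfun_sub_one_le hk hl hkl hE h).trans_lt ?_
  rw [div_lt_iff₀ hE, mul_add, mul_div_cancel₀ _ hδ.ne']
  linarith

lemma Dfun_ne_zero_of_le (hk : k ≠ 0) (hl : l ≠ 0) (hkl : k + l ≠ 0)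
    (h : 4 * (6 * ω ^ 2 + 1) ≤ |(k : ℝ)| + |(l : ℝ)|) :
    Dfun k l ω ≠ 0 := by
  intro h0
  have := abs_Dfun_sub_one_lt (ω := ω) hk hl hkl one_pos (by rw [div_one]; linarith)
  norm_num [h0] at this

end Estimate

noncomputable def Dnumerator (k l : ℤ) : ℝ[X] :=
  let q₁ : ℝ[X] := C ((k : ℝ) * l) + 2 * X ^ 2
  let q₂ : ℝ[X] := C ((l : ℝ) ^ 2 + k * l) - 2 * X ^ 2
  let q₃ : ℝ[X] := C ((k : ℝ) ^ 2 + k * l) - 2 * X ^ 2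
  let q₄ : ℝ[X] := C ((k : ℝ) ^ 2 + (l : ℝ) ^ 2 + k * l) - 2 * X ^ 2
  q₁ * q₂ * q₃ * q₄ - X ^ 2 * (q₂ * q₃ * q₄ + q₁ * q₃ * q₄ + q₁ * q₂ * q₄ + q₁ * q₂ * q₃)

lemma eval_Dnumerator {k l : ℤ} {ω : ℝ} (h : admissible k l ω) :
    (Dnumerator k l).eval ω = Dfun k l ω *
      (((k : ℝ) * l + 2 * ω ^ 2) * ((l : ℝ) ^ 2 + k * l - 2 * ω ^ 2) *
        ((k : ℝ) ^ 2 + k * l - 2 * ω ^ 2) * ((k : ℝ) ^ 2 + (l : ℝ) ^ 2 + k * l - 2 * ω ^ 2)) := by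
  obtain ⟨-, -, -, h₁, h₂, h₃, h₄⟩ := h
  rw [← sub_add_cancel (Dfun k l ω) 1, Dfun_sub_one]
  simp only [Dnumerator, eval_sub, eval_add, eval_mul, eval_pow, eval_C, eval_X, eval_ofNat]
  generalize (k : ℝ) * l + 2 * ω ^ 2 = d₁ at *
  generalize (l : ℝ) ^ 2 + k * l - 2 * ω ^ 2 = d₂ at *
  generalize (k : ℝ) ^ 2 + k * l - 2 * ω ^ 2 = d₃ at *
  generalize (k : ℝ) ^ 2 + (l : ℝ) ^ 2 + k * l - 2 * ω ^ 2 = d₄ at *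
  field_simp
  ring

lemma Dnumerator_ne_zero {k l : ℤ} (hk : k ≠ 0) (hl : l ≠ 0) (hkl : k + l ≠ 0) :
    Dnumerator k l ≠ 0 := by
  obtain ⟨b₁, b₂, b₃, b₄⟩ := abs_add_abs_le_four_mul_abs_bases hk hl hkl
  have hM : 0 < |(k : ℝ)| + |(l : ℝ)| := by
    linarith [one_le_abs_intCast hk, one_le_abs_intCast hl]
  have ne_zero {x : ℝ} (hx : |(k : ℝ)| + |(l : ℝ)| ≤ 4 * |x|) : x ≠ 0 := by
    rintro rfl; simp only [abs_zero, mul_zero] at hx; linarith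
  intro h0
  have := congrArg (eval 0) h0
  simp only [Dnumerator, eval_sub, eval_add, eval_mul, eval_pow, eval_C, eval_X, eval_ofNat,
    eval_zero] at this
  exact mul_ne_zero (mul_ne_zero (mul_ne_zero (ne_zero b₁) (ne_zero b₂)) (ne_zero b₃))
    (ne_zero b₄) (by linear_combination this)

lemma finite_setOf_abs_add_abs_lt (B : ℝ) :
    {p : ℤ × ℤ | |(p.1 : ℝ)| + |(p.2 : ℝ)| < B}.Finite := by
  obtain ⟨N, hN⟩ := exists_nat_ge B
  refine ((Set.finite_Icc (-(N : ℤ)) N).prod (Set.finite_Icc (-(N : ℤ)) N)).subset ?_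
  rintro ⟨a, b⟩ hab
  have ha : |(a : ℝ)| ≤ N := by linarith [abs_nonneg (b : ℝ), hab.out]
  have hb : |(b : ℝ)| ≤ N := by linarith [abs_nonneg (a : ℝ), hab.out]
  rw [← Int.cast_abs, ← Int.cast_natCast, Int.cast_le] at ha hb
  exact ⟨abs_le.mp ha, abs_le.mp hb⟩

lemma finite_setOf_Dfun_eq_zero (R : ℝ) :
    {ω : ℝ | ω ^ 2 ≤ R ∧ ∃ k l, admissible k l ω ∧ Dfun k l ω = 0}.Finite := by
  let T := {p : ℤ × ℤ | (p.1 ≠ 0 ∧ p.2 ≠ 0 ∧ p.1 + p.2 ≠ 0) ∧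
    |(p.1 : ℝ)| + |(p.2 : ℝ)| < 4 * (6 * R + 1)}
  have hT : T.Finite := (finite_setOf_abs_add_abs_lt _).subset fun p hp => hp.2
  refine (hT.biUnion fun p hp => finite_setOfPred_isRoot
    (Dnumerator_ne_zero hp.1.1 hp.1.2.1 hp.1.2.2)).subset ?_
  rintro ω ⟨hR, k, l, hadm, h0⟩
  have hsmall : |(k : ℝ)| + |(l : ℝ)| < 4 * (6 * R + 1) := by
    by_contra! hlarge
    exact Dfun_ne_zero_of_le hadm.1 hadm.2.1 hadm.2.2.1 (by linarith) h0
  refine Set.mem_iUnion₂.mpr ⟨(k, l), ⟨⟨hadm.1, hadm.2.1, hadm.2.2.1⟩, hsmall⟩, ?_⟩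
  show IsRoot _ ω
  rw [IsRoot, eval_Dnumerator hadm, h0, zero_mul]

/-- For fixed `ω > 0`, `D(k,ℓ,ω) → 1` as `|k| + |ℓ| → ∞` over admissible
pairs; consequently there is a finite exceptional set `S` such that for all
`ω ∈ (1/2, 3/2) \ S`, `D(k,ℓ,ω) ≠ 0` for every admissible pair `(k,ℓ)`. -/
theorem D_tendsto_one :
    (∀ ω : ℝ, 0 < ω → ∀ δ : ℝ, 0 < δ → ∃ N : ℕ, ∀ k l : ℤ, admissible k l ω →
      (N : ℝ) ≤ |(k : ℝ)| + |(l : ℝ)| → |Dfun k l ω - 1| < δ) ∧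
    ∃ S : Set ℝ, S.Finite ∧ ∀ ω ∈ Set.Ioo (1 / 2 : ℝ) (3 / 2), ω ∉ S →
      ∀ k l : ℤ, admissible k l ω → Dfun k l ω ≠ 0 := by
  refine ⟨fun ω _ δ hδ => ?_, _, finite_setOf_Dfun_eq_zero (9 / 4), ?_⟩
  · obtain ⟨N, hN⟩ := exists_nat_ge (4 * (4 * ω ^ 2 / δ + 1 + 2 * ω ^ 2))
    exact ⟨N, fun k l h hkl => abs_Dfun_sub_one_lt h.1 h.2.1 h.2.2.1 hδ (hN.trans hkl)⟩
  · rintro ω ⟨hω₁, hω₂⟩ hS k l h h0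
    exact hS ⟨by nlinarith, k, l, h, h0⟩
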